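/- arXiv:2506.02337 — 2 statements merged into one kernel-verified Lean document; each statement's English description precedes it below -/
import Mathlib

section
/- Let H be an RKHS with kernel K on Ω, f ∈ H, points x₁,…,x_N, x ∈ Ω, σ² > 0, A = K(X,X)+σ²I, and φ(x)ᵀ = K(x,X)A⁻¹. Then the deterministic prediction error satisfies |f(x) − Σᵢ φᵢ(x) f(xᵢ)| ≤ σ(x)·‖f‖_H, where σ(x)² = K(x,x) − K(x,X)A⁻¹K(X,x). -/
open Matrix
open scoped RealInnerProductSpace

/-!
With `v i = k (X i)`, the prediction error is `⟪f, r⟫` for the residual `r = k x - ∑ φᵢ • v i`,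
so Cauchy–Schwarz bounds it by `‖r‖ ‖f‖`. Expanding `‖r‖²` through the Gram matrix and using
`(G + σ² I) φ = K(X,x)` gives `‖r‖² = K(x,x) - K(x,X) φ - σ² ‖φ‖² ≤ σ(x)²`.
-/

section Regularized

variable {ι H : Type*} [Fintype ι] [NormedAddCommGroup H] [InnerProductSpace ℝ H]

lemma posDef_gram_add_smul_one [DecidableEq ι] (v : ι → H) {σ : ℝ} (hσ : 0 < σ) :
    (gram ℝ v + σ • (1 : Matrix ι ι ℝ)).PosDef :=
  PosDef.posSemidef_add (posSemidef_gram ℝ v) (PosDef.one.smul hσ)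

lemma norm_sub_sum_smul_sq_of_gram_add_smul_one_mulVec_eq [DecidableEq ι] (v : ι → H) (w : H)
    (σ : ℝ) {c : ι → ℝ} (hc : (gram ℝ v + σ • (1 : Matrix ι ι ℝ)) *ᵥ c = fun i => ⟪v i, w⟫) :
    ‖w - ∑ i, c i • v i‖ ^ 2 = ‖w‖ ^ 2 - (fun i => ⟪v i, w⟫) ⬝ᵥ c - σ * (c ⬝ᵥ c) := by
  set b : ι → ℝ := fun i => ⟪v i, w⟫
  have hGc : gram ℝ v *ᵥ c = b - σ • c := by
    rw [← hc, add_mulVec, smul_mulVec, one_mulVec, add_sub_cancel_right]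
  have hcross : ⟪w, ∑ i, c i • v i⟫ = b ⬝ᵥ c := by
    simp only [inner_sum, real_inner_smul_right, dotProduct, b, real_inner_comm w, mul_comm]
  have hsq : ‖∑ i, c i • v i‖ ^ 2 = c ⬝ᵥ (b - σ • c) := by
    rw [← real_inner_self_eq_norm_sq, ← star_dotProduct_gram_mulVec, hGc, star_trivial]
  rw [norm_sub_sq_real, hcross, hsq, dotProduct_sub, dotProduct_smul, dotProduct_comm c b,
    smul_eq_mul]
  ring

end Regularized

/-- Deterministic GP prediction error bound: with `φ(x) = A⁻¹ K(X,x)`,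
`|f(x) − Σᵢ φᵢ(x) f(xᵢ)| ≤ σ(x) ‖f‖_H` where
`σ(x)² = K(x,x) − K(x,X) A⁻¹ K(X,x)`.  The RKHS is modeled by a real inner
product space `H` with kernel sections `k : Ω → H`, evaluation `f(y)=⟪f,k y⟫`. -/
theorem stmt_6 {Ω : Type*} {H : Type*} [NormedAddCommGroup H] [InnerProductSpace ℝ H]
    (k : Ω → H) (f : H) (N : ℕ) (X : Fin N → Ω) (x : Ω) (σsq : ℝ) (hσ : 0 < σsq) :
    let G : Matrix (Fin N) (Fin N) ℝ := Matrix.of fun i j => ⟪k (X i), k (X j)⟫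
    let A : Matrix (Fin N) (Fin N) ℝ := G + σsq • (1 : Matrix (Fin N) (Fin N) ℝ)
    let kx : Fin N → ℝ := fun i => ⟪k (X i), k x⟫
    let φ : Fin N → ℝ := A⁻¹ *ᵥ kx
    |⟪f, k x⟫ - ∑ i, φ i * ⟪f, k (X i)⟫| ≤
      Real.sqrt (⟪k x, k x⟫ - kx ⬝ᵥ (A⁻¹ *ᵥ kx)) * ‖f‖ := by
  intro G A kx φ
  have hA : A.PosDef := posDef_gram_add_smul_one (k ∘ X) hσ
  have hφ : A *ᵥ φ = kx := by
    rw [mulVec_mulVec, mul_nonsing_inv A ((isUnit_iff_isUnit_det A).mp hA.isUnit), one_mulVec]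
  set r := k x - ∑ i, φ i • k (X i)
  have hr : ‖r‖ ≤ Real.sqrt (⟪k x, k x⟫ - kx ⬝ᵥ (A⁻¹ *ᵥ kx)) := by
    have hr2 : ‖r‖ ^ 2 = ‖k x‖ ^ 2 - kx ⬝ᵥ φ - σsq * (φ ⬝ᵥ φ) :=
      norm_sub_sum_smul_sq_of_gram_add_smul_one_mulVec_eq (k ∘ X) (k x) σsq hφ
    have hφφ : 0 ≤ σsq * (φ ⬝ᵥ φ) :=
      mul_nonneg hσ.le (Finset.sum_nonneg fun i _ => mul_self_nonneg (φ i))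
    rw [← abs_norm]
    refine Real.abs_le_sqrt ?_
    rw [hr2, real_inner_self_eq_norm_sq]
    linarith
  calc |⟪f, k x⟫ - ∑ i, φ i * ⟪f, k (X i)⟫| = |⟪f, r⟫| := by
        simp only [r, inner_sub_right, inner_sum, real_inner_smul_right]
    _ ≤ ‖f‖ * ‖r‖ := abs_real_inner_le_norm f r
    _ ≤ _ := by rw [mul_comm]; gcongr
end

section
/- Let H be an RKHS with kernel K on Ω, f ∈ H, training data yᵢ = f(xᵢ) + εᵢ with independent εᵢ ∼ N(0,σ_ε²), and let f̂(x) = K(x,X)(K(X,X)+σ_ε²I)⁻¹ Y. Then the pointwise mean squared error satisfies MSE(x) = E[(f(x) − f̂(x))²] ≤ σ(x)² ‖f‖²_H + σ_ε² ‖K(x,X)(K(X,X)+σ_ε²I)⁻¹‖₂², where σ(x)² = K(x,x) − K(x,X)(K(X,X)+σ_ε²I)⁻¹K(X,x). -/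
/-
With `A = K(X,X) + σ_ε² I` symmetric positive definite and `φ = A⁻¹ K(X,x)`, the estimator is
linear in the data, `f̂(x) = ∑ φᵢ yᵢ`, so the error splits as `f(x) - f̂(x) = c - ∑ φᵢ εᵢ` with the
deterministic bias `c = f(x) - ∑ φᵢ f(xᵢ)`. Centred independent noise gives
`E[(c - ∑ φᵢ εᵢ)²] = c² + σ_ε² ‖φ‖²`. By the reproducing property `c = ⟪f, h⟫` with
`h = k(x) - ∑ φᵢ k(xᵢ)`, and expanding `‖h‖²` with `A φ = K(X,x)` gives
`‖h‖² = σ(x)² - σ_ε² ‖φ‖² ≤ σ(x)²`; Cauchy–Schwarz then bounds `c²` by `σ(x)² ‖f‖²`.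
-/

open Matrix MeasureTheory ProbabilityTheory
open scoped NNReal RealInnerProductSpace

section Noise

variable {Θ : Type*} [MeasurableSpace Θ] {μ : Measure Θ}

lemma integral_sq_const_sub [IsProbabilityMeasure μ] {S : Θ → ℝ} (hS : MemLp S 2 μ) (c : ℝ) :
    ∫ θ, (c - S θ) ^ 2 ∂μ = (c - μ[S]) ^ 2 + Var[S; μ] := by
  have h := variance_eq_sub ((memLp_const c).sub hS)
  rw [show ((fun _ => c) - S) = fun θ => c - S θ from rfl,
    variance_const_sub hS.aestronglyMeasurable, integral_sub (integrable_const c)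
      (hS.integrable one_le_two)] at h
  simp only [integral_const, probReal_univ, one_smul, Pi.pow_apply] at h
  rw [h]
  ring

lemma variance_sum_const_mul {ι : Type*} [Fintype ι] [IsFiniteMeasure μ] {ε : ι → Θ → ℝ}
    (hL2 : ∀ i, MemLp (ε i) 2 μ) (hind : Pairwise fun i j => IndepFun (ε i) (ε j) μ)
    (a : ι → ℝ) :
    Var[fun θ => ∑ i, a i * ε i θ; μ] = ∑ i, a i ^ 2 * Var[ε i; μ] := by
  have h := IndepFun.variance_sum (μ := μ) (X := fun i θ => a i * ε i θ) (s := Finset.univ)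
    (fun i _ => (hL2 i).const_mul (a i))
    (fun i _ j _ hij => (hind hij).comp (measurable_const_mul (a i)) (measurable_const_mul (a j)))
  simp only [Finset.sum_fn] at h
  rw [h]
  exact Finset.sum_congr rfl fun i _ => variance_const_mul _ _ _

lemma integral_sq_const_sub_sum_const_mul {ι : Type*} [Fintype ι] [IsProbabilityMeasure μ]
    {ε : ι → Θ → ℝ} {v : ℝ} (hL2 : ∀ i, MemLp (ε i) 2 μ)
    (hind : Pairwise fun i j => IndepFun (ε i) (ε j) μ) (hmean : ∀ i, μ[ε i] = 0)
    (hvar : ∀ i, Var[ε i; μ] = v) (c : ℝ) (a : ι → ℝ) :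
    ∫ θ, (c - ∑ i, a i * ε i θ) ^ 2 ∂μ = c ^ 2 + v * ∑ i, a i ^ 2 := by
  have hS : MemLp (fun θ => ∑ i, a i * ε i θ) 2 μ :=
    memLp_finsetSum _ fun i _ => (hL2 i).const_mul (a i)
  rw [integral_sq_const_sub hS, variance_sum_const_mul hL2 hind,
    integral_finsetSum _ fun i _ => ((hL2 i).integrable one_le_two).const_mul (a i)]
  simp only [integral_const_mul, hmean, hvar, mul_zero, Finset.sum_const_zero, sub_zero,
    Finset.sum_mul, mul_comm v]

end Noise

section RegularizedGram

variable {E : Type*} [NormedAddCommGroup E] [InnerProductSpace ℝ E]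
  {n : Type*} [Fintype n] [DecidableEq n]

lemma posDef_gram_add_smul_one_s8 (u : n → E) {v : ℝ} (hv : 0 < v) :
    (gram ℝ u + v • (1 : Matrix n n ℝ)).PosDef :=
  PosDef.posSemidef_add (posSemidef_gram ℝ u) (PosDef.one.smul hv)

lemma norm_sub_sum_smul_sq_of_gram_add_smul_one_mulVec {u : n → E} {w : E} {v : ℝ}
    {φ : n → ℝ} (hφ : (gram ℝ u + v • (1 : Matrix n n ℝ)) *ᵥ φ = fun i => ⟪u i, w⟫) :
    ‖w - ∑ i, φ i • u i‖ ^ 2 = ⟪w, w⟫ - (fun i => ⟪u i, w⟫) ⬝ᵥ φ - v * (φ ⬝ᵥ φ) := by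
  have hcross : ⟪w, ∑ i, φ i • u i⟫ = (fun i => ⟪u i, w⟫) ⬝ᵥ φ := by
    simp only [inner_sum, real_inner_smul_right, dotProduct, real_inner_comm w, mul_comm]
  have hgram : ⟪∑ i, φ i • u i, ∑ i, φ i • u i⟫ =
      (fun i => ⟪u i, w⟫) ⬝ᵥ φ - v * (φ ⬝ᵥ φ) := by
    have h := star_dotProduct_gram_mulVec (𝕜 := ℝ) u φ φ
    rw [star_trivial] at h
    rw [← h, show gram ℝ u *ᵥ φ = (fun i => ⟪u i, w⟫) - v • φ by
        rw [← hφ, add_mulVec, smul_mulVec, one_mulVec, add_sub_cancel_right],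
      dotProduct_sub, dotProduct_smul, dotProduct_comm, smul_eq_mul]
  rw [norm_sub_sq_real, ← real_inner_self_eq_norm_sq, ← real_inner_self_eq_norm_sq, hcross,
    hgram]
  ring

lemma sq_inner_sub_sum_le_of_gram_add_smul_one_mulVec {u : n → E} {w : E} {v : ℝ} {φ : n → ℝ}
    (hv : 0 ≤ v) (hφ : (gram ℝ u + v • (1 : Matrix n n ℝ)) *ᵥ φ = fun i => ⟪u i, w⟫) (f : E) :
    (⟪f, w⟫ - ∑ i, φ i * ⟪f, u i⟫) ^ 2 ≤ (⟪w, w⟫ - (fun i => ⟪u i, w⟫) ⬝ᵥ φ) * ‖f‖ ^ 2 := by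
  have hinner : ⟪f, w⟫ - ∑ i, φ i * ⟪f, u i⟫ = ⟪f, w - ∑ i, φ i • u i⟫ := by
    simp only [inner_sub_right, inner_sum, real_inner_smul_right]
  have hresidual : ‖w - ∑ i, φ i • u i‖ ^ 2 ≤ ⟪w, w⟫ - (fun i => ⟪u i, w⟫) ⬝ᵥ φ := by
    rw [norm_sub_sum_smul_sq_of_gram_add_smul_one_mulVec hφ]
    have : 0 ≤ v * (φ ⬝ᵥ φ) := mul_nonneg hv (dotProduct_self_star_nonneg φ)
    linarith
  calc (⟪f, w⟫ - ∑ i, φ i * ⟪f, u i⟫) ^ 2 = |⟪f, w - ∑ i, φ i • u i⟫| ^ 2 := by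
        rw [hinner, sq_abs]
    _ ≤ (‖f‖ * ‖w - ∑ i, φ i • u i‖) ^ 2 := by
        gcongr
        exact abs_real_inner_le_norm _ _
    _ ≤ (⟪w, w⟫ - (fun i => ⟪u i, w⟫) ⬝ᵥ φ) * ‖f‖ ^ 2 := by
        rw [mul_pow, mul_comm]
        gcongr

end RegularizedGram

theorem stmt_8_general {Θ : Type*} [MeasurableSpace Θ] (μ : Measure Θ) [IsProbabilityMeasure μ]
    {Ω : Type*} {H : Type*} [NormedAddCommGroup H] [InnerProductSpace ℝ H]
    (k : Ω → H) (f : H) (N : ℕ) (X : Fin N → Ω) (x : Ω)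
    (v : ℝ≥0) (hv : 0 < v) (ε : Fin N → Θ → ℝ)
    (hind : iIndepFun ε μ)
    (hgauss : ∀ i, Measure.map (ε i) μ = gaussianReal 0 v) :
    let G : Matrix (Fin N) (Fin N) ℝ := Matrix.of fun i j => ⟪k (X i), k (X j)⟫
    let A : Matrix (Fin N) (Fin N) ℝ := G + (v : ℝ) • (1 : Matrix (Fin N) (Fin N) ℝ)
    let kx : Fin N → ℝ := fun i => ⟪k (X i), k x⟫
    let φ : Fin N → ℝ := A⁻¹ *ᵥ kx
    let Y : Θ → Fin N → ℝ := fun θ i => ⟪f, k (X i)⟫ + ε i θ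
    let fhat : Θ → ℝ := fun θ => kx ⬝ᵥ (A⁻¹ *ᵥ Y θ)
    ∫ θ, (⟪f, k x⟫ - fhat θ) ^ 2 ∂μ ≤
      (⟪k x, k x⟫ - kx ⬝ᵥ (A⁻¹ *ᵥ kx)) * ‖f‖ ^ 2 + (v : ℝ) * ∑ i, (φ i) ^ 2 := by
  intro G A kx φ Y fhat
  have hA : A.PosDef := posDef_gram_add_smul_one_s8 (k ∘ X) (by exact_mod_cast hv)
  have hAφ : A *ᵥ φ = kx := by
    rw [mulVec_mulVec, mul_nonsing_inv _ hA.det_pos.ne'.isUnit, one_mulVec]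
  have hAinv_symm : A⁻¹ᵀ = A⁻¹ := (isHermitian_iff_isSymm.1 hA.isHermitian.inv).eq
  have herror : ∀ θ, ⟪f, k x⟫ - fhat θ =
      (⟪f, k x⟫ - ∑ i, φ i * ⟪f, k (X i)⟫) - ∑ i, φ i * ε i θ := fun θ => by
    rw [show fhat θ = Y θ ⬝ᵥ φ by rw [← dotProduct_transpose_mulVec, hAinv_symm]]
    simp only [Y, dotProduct, add_mul, Finset.sum_add_distrib, mul_comm (φ _)]
    ring
  have hlaw : ∀ i, HasLaw (ε i) (gaussianReal 0 v) μ := fun i =>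
    ⟨aemeasurable_of_map_neZero (by rw [hgauss i]; infer_instance), hgauss i⟩
  calc ∫ θ, (⟪f, k x⟫ - fhat θ) ^ 2 ∂μ
      = (⟪f, k x⟫ - ∑ i, φ i * ⟪f, k (X i)⟫) ^ 2 + v * ∑ i, φ i ^ 2 := by
        simp_rw [herror]
        exact integral_sq_const_sub_sum_const_mul (fun i => (hlaw i).hasGaussianLaw.memLp_two)
          (fun i j hij => hind.indepFun hij)
          (fun i => (hlaw i).integral_eq.trans integral_id_gaussianReal)
          (fun i => (hlaw i).variance_eq.trans variance_id_gaussianReal) _ _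
    _ ≤ _ := by
        gcongr
        exact sq_inner_sub_sum_le_of_gram_add_smul_one_mulVec v.coe_nonneg hAφ f

/-- Pointwise MSE bound for GP regression with noisy data `yᵢ = f(xᵢ) + εᵢ`:
`E[(f(x) − f̂(x))²] ≤ σ(x)² ‖f‖²_H + σ_ε² ‖K(x,X)(K(X,X)+σ_ε²I)⁻¹‖₂²`, where
`σ(x)² = K(x,x) − K(x,X)(K(X,X)+σ_ε²I)⁻¹K(X,x)`.  The RKHS is modeled by a real
inner product space `H` with kernel sections `k : Ω → H`, evaluation
`f(y) = ⟪f, k y⟫`; the expectation is over the Gaussian noise. -/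
theorem stmt_8 {Θ : Type*} [MeasurableSpace Θ] (μ : Measure Θ) [IsProbabilityMeasure μ]
    {Ω : Type*} {H : Type*} [NormedAddCommGroup H] [InnerProductSpace ℝ H]
    (k : Ω → H) (f : H) (N : ℕ) (X : Fin N → Ω) (x : Ω)
    (v : ℝ≥0) (hv : 0 < v) (ε : Fin N → Θ → ℝ)
    (hmeas : ∀ i, Measurable (ε i))
    (hind : iIndepFun ε μ)
    (hgauss : ∀ i, Measure.map (ε i) μ = gaussianReal 0 v) :
    let G : Matrix (Fin N) (Fin N) ℝ := Matrix.of fun i j => ⟪k (X i), k (X j)⟫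
    let A : Matrix (Fin N) (Fin N) ℝ := G + (v : ℝ) • (1 : Matrix (Fin N) (Fin N) ℝ)
    let kx : Fin N → ℝ := fun i => ⟪k (X i), k x⟫
    let φ : Fin N → ℝ := A⁻¹ *ᵥ kx
    let Y : Θ → Fin N → ℝ := fun θ i => ⟪f, k (X i)⟫ + ε i θ
    let fhat : Θ → ℝ := fun θ => kx ⬝ᵥ (A⁻¹ *ᵥ Y θ)
    ∫ θ, (⟪f, k x⟫ - fhat θ) ^ 2 ∂μ ≤
      (⟪k x, k x⟫ - kx ⬝ᵥ (A⁻¹ *ᵥ kx)) * ‖f‖ ^ 2 + (v : ℝ) * ∑ i, (φ i) ^ 2 :=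
  stmt_8_general μ k f N X x v hv ε hind hgauss
end
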